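/- Let H ∈ (0,1), set c_f = (2π)^{−1} sin(πH) Γ(2H+1), and define, for λ ∈ [−π,π]\{0}, f(λ) = 2 c_f (1 − cos λ) Σ_{j∈ℤ} |2πj + λ|^{−2H−1}. Then f ∈ L¹([−π,π]). -/

import Mathlib

open MeasureTheory Filter Real Topology

/-- The spectral density of fractional Gaussian noise with Hurst parameter `H ∈ (0,1)`
is integrable on `[-π, π]`. -/
theorem fgn_spectral_density_integrable
    (H : ℝ) (hH : H ∈ Set.Ioo (0 : ℝ) 1)
    (cf : ℝ) (hcf : cf = (2 * π)⁻¹ * Real.sin (π * H) * Real.Gamma (2 * H + 1))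
    (f : ℝ → ℝ)
    (hf : ∀ l : ℝ, f l =
      2 * cf * (1 - Real.cos l) * ∑' j : ℤ, |2 * π * j + l| ^ (-(2 * H) - 1)) :
    IntegrableOn f (Set.Icc (-π) π) := by
  obtain ⟨hH0, hH1⟩ := hH
  have hπ : (0:ℝ) < π := Real.pi_pos
  set s : ℝ := -(2 * H) - 1 with hs
  have hs_neg : s < 0 := by simp only [hs]; linarith
  have hcf_pos : 0 < cf := by
    rw [hcf]
    apply mul_pos (mul_pos (by positivity) _) (Real.Gamma_pos_of_pos (by linarith))
    exact Real.sin_pos_of_pos_of_lt_pi (by positivity) (by nlinarith)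
  set a : ℤ → ℝ → ℝ := fun j l => |2 * π * j + l| ^ s with ha
  set b : ℤ → ℝ → ℝ := fun j l => (if j = 0 then |l| ^ s else 0) + (π * |(j:ℝ)|) ^ s with hb
  -- summability of the dominating sequence tail
  have hsum_c : Summable (fun j : ℤ => (π * |(j:ℝ)|) ^ s) := by
    have h1 : Summable (fun j : ℤ => |(j:ℝ)| ^ (-(2*H+1))) :=
      Real.summable_abs_int_rpow (by linarith)
    have : (fun j : ℤ => (π * |(j:ℝ)|) ^ s) = fun j : ℤ => π ^ s * |(j:ℝ)| ^ (-(2*H+1)) := by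
      funext j
      rw [Real.mul_rpow hπ.le (abs_nonneg _)]
      congr 1
      congr 1
      simp only [hs]; ring
    rw [this]
    exact h1.mul_left _
  have hsum_ite : ∀ l : ℝ, Summable (fun j : ℤ => if j = 0 then |l| ^ s else 0) :=
    fun l => ⟨_, hasSum_ite_eq 0 (|l| ^ s)⟩
  have hsum_b : ∀ l : ℝ, Summable (fun j => b j l) := fun l => (hsum_ite l).add hsum_c
  -- termwise bound, for l ∈ [-π, π]
  have hab : ∀ l ∈ Set.Icc (-π) π, ∀ j : ℤ, a j l ≤ b j l := by
    intro l hl j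
    rcases eq_or_ne j 0 with rfl | hj
    · simp only [ha, hb, if_pos rfl, Int.cast_zero, mul_zero, abs_zero,
        Real.zero_rpow hs_neg.ne, add_zero, zero_add]
      norm_num
    · have hj1 : (1:ℝ) ≤ |(j:ℝ)| := by
        rw [← Int.cast_abs]
        exact_mod_cast Int.one_le_abs hj
      have hlb : π * |(j:ℝ)| ≤ |2 * π * j + l| := by
        have h1 : |2 * π * (j:ℝ)| ≤ |2 * π * j + l| + |l| := by
          have := abs_add_le (2 * π * (j:ℝ) + l) (-l)
          simpa using this
        have h2 : |2 * π * (j:ℝ)| = 2 * π * |(j:ℝ)| := by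
          rw [abs_mul, abs_of_pos (by positivity : (0:ℝ) < 2 * π)]
        have h3 : |l| ≤ π := abs_le.2 ⟨hl.1, hl.2⟩
        nlinarith
      simp only [ha, hb, if_neg hj, zero_add]
      exact Real.rpow_le_rpow_of_nonpos (by positivity) hlb hs_neg.le
  have hsum_a : ∀ l ∈ Set.Icc (-π) π, Summable (fun j => a j l) := by
    intro l hl
    exact Summable.of_nonneg_of_le (fun j => Real.rpow_nonneg (abs_nonneg _) _)
      (hab l hl) (hsum_b l)
  set T : ℝ := ∑' j : ℤ, (π * |(j:ℝ)|) ^ s with hT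
  have hT_nonneg : 0 ≤ T := tsum_nonneg fun j => Real.rpow_nonneg (by positivity) _
  -- tsum bound
  have hS_le : ∀ l ∈ Set.Icc (-π) π, (∑' j, a j l) ≤ |l| ^ s + T := by
    intro l hl
    calc (∑' j, a j l) ≤ ∑' j, b j l := Summable.tsum_le_tsum (hab l hl) (hsum_a l hl) (hsum_b l)
      _ = (∑' j : ℤ, if j = 0 then |l| ^ s else 0) + T :=
          Summable.tsum_add (hsum_ite l) hsum_c
      _ = |l| ^ s + T := by rw [tsum_ite_eq]
  -- the dominating function
  set g : ℝ → ℝ := fun l => cf * |l| ^ (1 - 2*H) + 4 * cf * T with hg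
  have hg_int : IntegrableOn g (Set.Icc (-π) π) := by
    have hr : (-1:ℝ) < 1 - 2*H := by linarith
    have h1 : IntervalIntegrable (fun x : ℝ => |x| ^ (1 - 2*H)) volume 0 π := by
      have h0 := intervalIntegral.intervalIntegrable_rpow' (a := 0) (b := π) hr
      rw [intervalIntegrable_iff_integrableOn_Ioc_of_le hπ.le] at h0 ⊢
      refine h0.congr_fun ?_ measurableSet_Ioc
      intro x hx
      show x ^ (1 - 2*H) = |x| ^ (1 - 2*H)
      rw [abs_of_pos hx.1]
    have h2 : IntervalIntegrable (fun x : ℝ => |x| ^ (1 - 2*H)) volume (-π) 0 := by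
      have := (IntervalIntegrable.iff_comp_neg).1 h1
      simpa using this.symm
    have h3 : IntervalIntegrable (fun x : ℝ => |x| ^ (1 - 2*H)) volume (-π) π :=
      h2.trans h1
    rw [intervalIntegrable_iff_integrableOn_Icc_of_le (by linarith)] at h3
    exact ((h3.const_mul cf).add (integrableOn_const measure_Icc_lt_top.ne))
  -- measurability of f on the restricted measure
  have hf_meas : AEStronglyMeasurable f (volume.restrict (Set.Icc (-π) π)) := by
    have hma : ∀ j : ℤ, Measurable (fun l => a j l) := by
      intro j
      simp only [ha]
      fun_prop
    set e : ℕ ≃ ℤ := (Denumerable.eqv ℤ).symm with he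
    have hS_meas : AEStronglyMeasurable (fun l => ∑' j, a j l)
        (volume.restrict (Set.Icc (-π) π)) := by
      refine aestronglyMeasurable_of_tendsto_ae atTop
        (f := fun n l => ∑ k ∈ Finset.range n, a (e k) l)
        (fun n => (Finset.measurable_sum _ fun k _ => hma (e k)).aestronglyMeasurable) ?_
      refine (ae_restrict_iff' measurableSet_Icc).2 (Filter.Eventually.of_forall ?_)
      intro l hl
      exact ((Equiv.hasSum_iff e).2 (hsum_a l hl).hasSum).tendsto_sum_nat
    have : f = fun l => (2 * cf * (1 - Real.cos l)) * ∑' j, a j l := funext hf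
    rw [this]
    exact ((measurable_const.mul ((measurable_const.sub Real.measurable_cos))).aestronglyMeasurable.mul hS_meas)
  -- domination
  refine Integrable.mono' hg_int hf_meas ?_
  filter_upwards [ae_restrict_mem measurableSet_Icc] with l hl
  have hS_nonneg : 0 ≤ ∑' j, a j l := tsum_nonneg fun j => Real.rpow_nonneg (abs_nonneg _) _
  have hcos : 0 ≤ 1 - Real.cos l := by have := Real.cos_le_one l; linarith
  have hf_nonneg : 0 ≤ f l := by
    rw [hf l]; exact mul_nonneg (mul_nonneg (by positivity) hcos) hS_nonneg
  rw [Real.norm_eq_abs, abs_of_nonneg hf_nonneg]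
  rcases eq_or_ne l 0 with rfl | hl0
  · rw [hf 0]
    simp only [Real.cos_zero, sub_self, mul_zero, zero_mul]
    have : 0 ≤ g 0 := add_nonneg (mul_nonneg hcf_pos.le (Real.rpow_nonneg (abs_nonneg _) _))
      (by positivity)
    linarith
  · have habs : (0:ℝ) < |l| := abs_pos.2 hl0
    have key : f l ≤ 2 * cf * (1 - Real.cos l) * (|l| ^ s + T) := by
      rw [hf l]
      exact mul_le_mul_of_nonneg_left (hS_le l hl) (mul_nonneg (by positivity) hcos)
    have h1 : 2 * cf * (1 - Real.cos l) * |l| ^ s ≤ cf * |l| ^ (1 - 2*H) := by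
      have hhalf : 1 - Real.cos l ≤ l ^ 2 / 2 := by
        have := Real.one_sub_sq_div_two_le_cos (x := l); linarith
      have e1 : cf * (l ^ 2) * |l| ^ s = cf * |l| ^ (1 - 2*H) := by
        rw [← sq_abs, ← Real.rpow_two, mul_assoc, ← Real.rpow_add habs]
        congr 2
        simp only [hs]; ring
      have h2 : 2 * cf * (1 - Real.cos l) * |l| ^ s ≤ 2 * cf * (l ^ 2 / 2) * |l| ^ s := by
        apply mul_le_mul_of_nonneg_right _ (Real.rpow_nonneg (abs_nonneg _) _)
        exact mul_le_mul_of_nonneg_left hhalf (by positivity)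
      calc 2 * cf * (1 - Real.cos l) * |l| ^ s ≤ 2 * cf * (l ^ 2 / 2) * |l| ^ s := h2
        _ = cf * (l ^ 2) * |l| ^ s := by ring
        _ = cf * |l| ^ (1 - 2*H) := e1
    have h2 : 2 * cf * (1 - Real.cos l) * T ≤ 4 * cf * T := by
      have hc2 : 1 - Real.cos l ≤ 2 := by have := Real.neg_one_le_cos l; linarith
      have : 2 * cf * (1 - Real.cos l) ≤ 4 * cf := by nlinarith
      exact mul_le_mul_of_nonneg_right this hT_nonneg
    have : 2 * cf * (1 - Real.cos l) * (|l| ^ s + T) =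
        2 * cf * (1 - Real.cos l) * |l| ^ s + 2 * cf * (1 - Real.cos l) * T := by ring
    rw [this] at key
    calc f l ≤ 2 * cf * (1 - Real.cos l) * |l| ^ s + 2 * cf * (1 - Real.cos l) * T := key
      _ ≤ cf * |l| ^ (1 - 2*H) + 4 * cf * T := add_le_add h1 h2
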